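/- Define K_n := ∫_0^∞ (ln(1+x))^n e^{-x} dx and m_{2n} := (n!)^2 K_n^2 for n ≥ 1 (the even-order moments of the symmetric random variable Y = ζ ξ₁ ξ₂ ln(1+η₁) ln(1+η₂), whose odd-order moments vanish). Then the sequence of even moments satisfies Carleman's condition for the Hamburger moment problem, ∑_{n=1}^∞ m_{2n}^{-1/(2n)} = ∞, but does not satisfy the even-order quadratic rate of growth condition: there is no constant C > 0 such that m_{2n+2} ≤ C (n+1)^2 m_{2n} for all n ≥ 1. -/

import Mathlib

/-!
Here `logMoment n` is `Kₙ = 𝔼[log (1 + η)ⁿ]` with `η ~ Exp(1)`. Splitting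
`log (1 + x) ≤ log n + x / n` gives `Kₙ ≤ (2 log n)ⁿ`, hence `m_{2n}^{-1/(2n)} ≥ (2 n log n)⁻¹`,
and these terms have divergent sum because `(n log n)⁻¹ ≥ log log (n + 1) - log log n` telescopes.
Conversely, the mass of `η` beyond `e^L - 1` gives `Kₙ ≥ c Lⁿ` for every `L`, so `K_{n+1} / Kₙ` is
unbounded, while quadratic growth of the moments would mean `K_{n+1}² ≤ C Kₙ²`.
-/

open MeasureTheory Filter Topology Real Set
open scoped Nat

lemma integrableOn_pow_mul_exp_neg (n : ℕ) :
    IntegrableOn (fun x : ℝ => x ^ n * exp (-x)) (Ioi 0) := by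
  refine (GammaIntegral_convergent (s := n + 1) (by positivity)).congr_fun (fun x _ => ?_)
    measurableSet_Ioi
  simp [mul_comm]

lemma integral_pow_mul_exp_neg (n : ℕ) : ∫ x in Ioi (0 : ℝ), x ^ n * exp (-x) = n ! := by
  rw [← Gamma_nat_eq_factorial, Gamma_eq_integral (by positivity)]
  exact setIntegral_congr_fun measurableSet_Ioi fun x _ => by simp [mul_comm]

lemma log_one_add_nonneg {x : ℝ} (hx : 0 ≤ x) : 0 ≤ log (1 + x) :=
  log_nonneg (by linarith)

noncomputable def logMoment (n : ℕ) : ℝ :=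
  ∫ x in Ioi (0 : ℝ), log (1 + x) ^ n * exp (-x)

lemma integrableOn_log_one_add_pow_mul_exp_neg (n : ℕ) :
    IntegrableOn (fun x : ℝ => log (1 + x) ^ n * exp (-x)) (Ioi 0) := by
  refine (integrableOn_pow_mul_exp_neg n).mono' (by fun_prop) ?_
  filter_upwards [ae_restrict_mem measurableSet_Ioi] with x (hx : 0 < x)
  have hlog : log (1 + x) ≤ x := by linarith [log_le_sub_one_of_pos (by linarith : 0 < 1 + x)]
  rw [norm_mul, norm_pow, norm_of_nonneg (log_one_add_nonneg hx.le), norm_of_nonneg (exp_pos _).le]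
  gcongr
  exact log_one_add_nonneg hx.le

lemma exists_pos_mul_pow_le_logMoment {L : ℝ} (hL : 0 ≤ L) :
    ∃ c > 0, ∀ n, c * L ^ n ≤ logMoment n := by
  set a := exp L - 1
  have ha : 0 ≤ a := by linarith [add_one_le_exp L]
  refine ⟨exp (-a), exp_pos _, fun n => ?_⟩
  have hsub : Ioi a ⊆ Ioi 0 := Ioi_subset_Ioi ha
  calc exp (-a) * L ^ n = ∫ x in Ioi a, L ^ n * exp (-x) := by
        rw [integral_const_mul, integral_exp_neg_Ioi, mul_comm]
    _ ≤ ∫ x in Ioi a, log (1 + x) ^ n * exp (-x) := by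
        refine setIntegral_mono_on ((integrableOn_exp_neg_Ioi a).const_mul _)
          ((integrableOn_log_one_add_pow_mul_exp_neg n).mono_set hsub) measurableSet_Ioi
          fun x (hx : a < x) => ?_
        have : L ≤ log (1 + x) := by
          rw [le_log_iff_exp_le (by linarith)]; linarith
        gcongr
    _ ≤ logMoment n := by
        refine setIntegral_mono_set (integrableOn_log_one_add_pow_mul_exp_neg n) ?_
          hsub.eventuallyLE
        filter_upwards [ae_restrict_mem measurableSet_Ioi] with x (hx : 0 < x)
        have := log_one_add_nonneg hx.le
        positivity

lemma logMoment_pos (n : ℕ) : 0 < logMoment n := by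
  obtain ⟨c, hc, h⟩ := exists_pos_mul_pow_le_logMoment zero_le_one
  exact hc.trans_le (by simpa using h n)

lemma log_one_add_le_log_add_div {x y : ℝ} (hx : 0 ≤ x) (hy : 1 ≤ y) :
    log (1 + x) ≤ log y + x / y := by
  have hy0 : 0 < y := by linarith
  have h := log_le_sub_one_of_pos (show 0 < (1 + x) / y by positivity)
  rw [log_div (by linarith) hy0.ne', add_div] at h
  have : 1 / y ≤ 1 := by rw [div_le_one hy0]; exact hy
  linarith

lemma logMoment_le (n : ℕ) {y : ℝ} (hy : 1 ≤ y) :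
    logMoment n ≤ 2 ^ (n - 1) * (log y ^ n + n ! / y ^ n) := by
  have hlogy : 0 ≤ log y := log_nonneg hy
  have hint : IntegrableOn (fun x : ℝ =>
      2 ^ (n - 1) * log y ^ n * exp (-x) + 2 ^ (n - 1) / y ^ n * (x ^ n * exp (-x))) (Ioi 0) :=
    ((integrableOn_exp_neg_Ioi 0).const_mul _).add ((integrableOn_pow_mul_exp_neg n).const_mul _)
  calc logMoment n
      ≤ ∫ x in Ioi (0 : ℝ),
          2 ^ (n - 1) * log y ^ n * exp (-x) + 2 ^ (n - 1) / y ^ n * (x ^ n * exp (-x)) := by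
        refine setIntegral_mono_on (integrableOn_log_one_add_pow_mul_exp_neg n) hint
          measurableSet_Ioi fun x (hx : 0 < x) => ?_
        have hsplit := add_pow_le hlogy (div_nonneg hx.le (by linarith : (0 : ℝ) ≤ y)) n
        calc log (1 + x) ^ n * exp (-x) ≤ (log y + x / y) ^ n * exp (-x) := by
              have := log_one_add_le_log_add_div hx.le hy
              have := log_one_add_nonneg hx.le
              gcongr
          _ ≤ 2 ^ (n - 1) * (log y ^ n + (x / y) ^ n) * exp (-x) := by gcongr
          _ = _ := by rw [div_pow]; ring
    _ = 2 ^ (n - 1) * (log y ^ n + n ! / y ^ n) := by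
        rw [integral_add ((integrableOn_exp_neg_Ioi 0).const_mul _)
          ((integrableOn_pow_mul_exp_neg n).const_mul _), integral_const_mul, integral_const_mul,
          integral_exp_neg_Ioi_zero, integral_pow_mul_exp_neg]
        ring

lemma logMoment_le_two_mul_log_pow {n : ℕ} (hn : 3 ≤ n) : logMoment n ≤ (2 * log n) ^ n := by
  have hn3 : (3 : ℝ) ≤ n := by exact_mod_cast hn
  have hlog : 1 ≤ log n := by
    rw [le_log_iff_exp_le (by linarith)]
    linarith [exp_one_lt_d9]
  have hfact : (n ! : ℝ) / (n : ℝ) ^ n ≤ log n ^ n := by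
    rw [div_le_iff₀ (by positivity)]
    calc (n ! : ℝ) ≤ (n : ℝ) ^ n := by exact_mod_cast Nat.factorial_le_pow n
      _ ≤ log n ^ n * (n : ℝ) ^ n := le_mul_of_one_le_left (by positivity) (one_le_pow₀ hlog)
  calc logMoment n ≤ 2 ^ (n - 1) * (log n ^ n + n ! / (n : ℝ) ^ n) :=
        logMoment_le n (by linarith)
    _ ≤ 2 ^ (n - 1) * (log n ^ n + log n ^ n) := by gcongr
    _ = 2 ^ (n - 1) * 2 * log n ^ n := by ring
    _ = (2 * log n) ^ n := by rw [pow_sub_one_mul (by omega), mul_pow]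

lemma inv_le_rpow_neg_inv_of_le_pow {x c : ℝ} {k : ℕ} (hx : 0 < x) (hc : 0 < c) (hk : k ≠ 0)
    (h : x ≤ c ^ k) : c⁻¹ ≤ x ^ (-(k : ℝ)⁻¹) := by
  rw [rpow_neg hx.le]
  refine inv_anti₀ (by positivity) ?_
  calc x ^ (k : ℝ)⁻¹ ≤ (c ^ k) ^ (k : ℝ)⁻¹ := by gcongr
    _ = c := pow_rpow_inv_natCast hc.le hk

lemma inv_le_factorial_mul_logMoment_rpow {n : ℕ} (hn : 3 ≤ n) :
    (2 * n * log n)⁻¹ ≤ ((n ! : ℝ) ^ 2 * logMoment n ^ 2) ^ (-(1 : ℝ) / (2 * n)) := by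
  have hlog : 0 < log n := log_pos (by exact_mod_cast (by omega : 1 < n))
  have hKn := logMoment_pos n
  have hbound : (n ! : ℝ) * logMoment n ≤ (2 * n * log n) ^ n := by
    calc (n ! : ℝ) * logMoment n ≤ (n : ℝ) ^ n * (2 * log n) ^ n := by
          gcongr
          · exact_mod_cast Nat.factorial_le_pow n
          · exact logMoment_le_two_mul_log_pow hn
      _ = (2 * n * log n) ^ n := by rw [← mul_pow]; ring
  have h := inv_le_rpow_neg_inv_of_le_pow (k := 2 * n) (by positivity) (by positivity) (by omega)
    (show (n ! : ℝ) ^ 2 * logMoment n ^ 2 ≤ (2 * n * log n) ^ (2 * n) by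
      rw [← mul_pow, mul_comm 2 n, pow_mul]; gcongr)
  convert h using 2
  push_cast
  ring

lemma log_log_add_one_sub_log_log_le {y : ℝ} (hy : 1 < y) :
    log (log (y + 1)) - log (log y) ≤ (y * log y)⁻¹ := by
  have hy0 : 0 < y := by linarith
  have hlog : 0 < log y := log_pos hy
  have hstep : log (y + 1) - log y ≤ y⁻¹ := by
    have h := log_le_sub_one_of_pos (show 0 < (y + 1) / y by positivity)
    rw [log_div (by linarith) hy0.ne', add_div, div_self hy0.ne'] at h
    simpa using h
  have h := log_le_sub_one_of_pos (show 0 < log (y + 1) / log y by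
    have := log_pos (show 1 < y + 1 by linarith); positivity)
  rw [log_div (log_pos (by linarith)).ne' hlog.ne'] at h
  calc log (log (y + 1)) - log (log y) ≤ (log (y + 1) - log y) / log y := by
        rwa [sub_div, div_self hlog.ne']
    _ ≤ y⁻¹ / log y := by gcongr
    _ = (y * log y)⁻¹ := by rw [mul_inv, div_eq_mul_inv]

lemma tendsto_sum_Icc_atTop_of_inv_mul_log_le {f : ℕ → ℝ} {c : ℝ} {n₀ : ℕ} (hc : 0 < c)
    (hn₀ : 2 ≤ n₀) (hf₀ : ∀ n, 0 ≤ f n) (hf : ∀ n, n₀ ≤ n → (c * n * log n)⁻¹ ≤ f n) :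
    Tendsto (fun N => ∑ n ∈ Finset.Icc 1 N, f n) atTop atTop := by
  set g : ℕ → ℝ := fun n => log (log n)
  have hg : Tendsto (fun N => c⁻¹ * (g (N + 1) - g n₀)) atTop atTop := by
    refine Tendsto.const_mul_atTop (inv_pos.2 hc) (tendsto_atTop_add_const_right _ _ ?_)
    exact (tendsto_log_atTop.comp (tendsto_log_atTop.comp tendsto_natCast_atTop_atTop)).comp
      (tendsto_add_atTop_nat 1)
  refine tendsto_atTop_mono' atTop ?_ hg
  filter_upwards [eventually_ge_atTop n₀] with N hN
  calc c⁻¹ * (g (N + 1) - g n₀) = ∑ n ∈ Finset.Ico n₀ (N + 1), c⁻¹ * (g (n + 1) - g n) := by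
        rw [← Finset.mul_sum, Finset.sum_Ico_sub g (by omega)]
    _ ≤ ∑ n ∈ Finset.Ico n₀ (N + 1), f n := by
        refine Finset.sum_le_sum fun n hn => ?_
        have hn₀n : n₀ ≤ n := (Finset.mem_Ico.1 hn).1
        have h1 : (1 : ℝ) < n := by exact_mod_cast (by omega : 1 < n)
        calc c⁻¹ * (g (n + 1) - g n) ≤ c⁻¹ * (n * log n)⁻¹ := by
              gcongr
              simpa [g] using log_log_add_one_sub_log_log_le h1
          _ = (c * n * log n)⁻¹ := by rw [mul_assoc, mul_inv c]
          _ ≤ f n := hf n hn₀n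
    _ ≤ ∑ n ∈ Finset.Icc 1 N, f n := by
        refine Finset.sum_le_sum_of_subset_of_nonneg (fun n hn => ?_) fun n _ _ => hf₀ n
        simp only [Finset.mem_Ico, Finset.mem_Icc] at hn ⊢
        omega

lemma not_forall_mul_pow_le_mul_pow {a b r s : ℝ} (ha : 0 < a) (hr : 0 < r) (hrs : r < s) :
    ¬ ∀ k : ℕ, a * s ^ k ≤ b * r ^ k := by
  intro h
  obtain ⟨k, hk⟩ := pow_unbounded_of_one_lt (b / a) ((one_lt_div hr).2 hrs)
  have := h k
  rw [div_pow, lt_div_iff₀ (by positivity), div_mul_eq_mul_div, div_lt_iff₀ ha] at hk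
  linarith

lemma not_exists_logMoment_succ_le :
    ¬ ∃ C : ℝ, ∀ n, 1 ≤ n → logMoment (n + 1) ≤ C * logMoment n := by
  rintro ⟨C, hC⟩
  set r := max C 1
  have hr : 0 < r := lt_of_lt_of_le one_pos (le_max_right C 1)
  have hgeom : ∀ k, logMoment (k + 1) ≤ r ^ k * logMoment 1 := fun k =>
    le_geom (u := fun k => logMoment (k + 1)) hr.le k fun j _ =>
      (hC (j + 1) (by omega)).trans
        (mul_le_mul_of_nonneg_right (le_max_left C 1) (logMoment_pos _).le)
  obtain ⟨c, hc, hlow⟩ := exists_pos_mul_pow_le_logMoment (L := r + 1) (by positivity)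
  refine not_forall_mul_pow_le_mul_pow (b := logMoment 1) (by positivity : 0 < c * (r + 1)) hr
    (lt_add_one r) fun k => ?_
  calc c * (r + 1) * (r + 1) ^ k = c * (r + 1) ^ (k + 1) := by ring
    _ ≤ r ^ k * logMoment 1 := (hlow (k + 1)).trans (hgeom k)
    _ = logMoment 1 * r ^ k := mul_comm _ _

/-- **Hamburger case.** The even-order moments `m_{2n} = (n!)² Kₙ²` (with
`Kₙ = ∫_0^∞ (ln(1+x))ⁿ e^{-x} dx`) of the symmetric random variable
`Y = ζ ξ₁ ξ₂ ln(1+η₁) ln(1+η₂)` satisfy Carleman's condition for the Hamburger moment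
problem, `∑ₙ m_{2n}^{-1/(2n)} = ∞`, but not the even-order quadratic rate of growth
condition `m_{2n+2} ≤ C (n+1)² m_{2n}`. -/
theorem hamburger_carleman_holds_quadratic_growth_fails
    (K : ℕ → ℝ)
    (hK : ∀ n : ℕ, K n = ∫ x in Set.Ioi (0 : ℝ), (Real.log (1 + x)) ^ n * Real.exp (-x))
    (m : ℕ → ℝ)
    (hm : ∀ n : ℕ, m (2 * n) = (n.factorial : ℝ) ^ 2 * K n ^ 2) :
    Tendsto (fun N : ℕ => ∑ n ∈ Finset.Icc 1 N, m (2 * n) ^ (-(1 : ℝ) / (2 * n)))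
      atTop atTop ∧
    ¬ ∃ C : ℝ, 0 < C ∧ ∀ n : ℕ, 1 ≤ n →
      m (2 * n + 2) ≤ C * (n + 1) ^ 2 * m (2 * n) := by
  obtain rfl : K = logMoment := funext hK
  refine ⟨tendsto_sum_Icc_atTop_of_inv_mul_log_le two_pos (Nat.le_succ 2)
    (fun n => rpow_nonneg (by rw [hm]; positivity) _)
    fun n hn => hm n ▸ inv_le_factorial_mul_logMoment_rpow hn, ?_⟩
  rintro ⟨C, hC, hgrowth⟩
  refine not_exists_logMoment_succ_le ⟨√C, fun n hn => ?_⟩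
  have h := hgrowth n hn
  rw [show 2 * n + 2 = 2 * (n + 1) by ring, hm, hm, Nat.factorial_succ] at h
  push_cast at h
  have hP : 0 < ((n + 1 : ℝ) * n !) ^ 2 := by positivity
  have hKn := logMoment_pos n
  refine (pow_le_pow_iff_left₀ (logMoment_pos _).le (by positivity) two_ne_zero).1
    (le_of_mul_le_mul_left ?_ hP)
  rw [mul_pow √C, sq_sqrt hC.le]
  linarith
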